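/- Let C ⊆ F_q^n be a proper linear code and m ≥ 2, and let ρ := ρ(C,…,C) (m times) be the product-expansion constant. Assume: (a) ρ(C, C) ≥ ρ and δ(C) ≥ ρ; (b) the agreement testability of C^{⊗2} satisfies ρ_a(C^{⊗2}) ≥ ρ(C, C); (c) ρ_r(T_2^1, C^{⊗2}) ≥ ρ_a(C^{⊗2})/(2(1 + ρ_a(C^{⊗2}))); (d) the axis-parallel hyperplane test bound ρ_r(T_k^{k−1}, C^{⊗k}) ≥ (1/12)·δ(C)^k for all 3 ≤ k ≤ m. Then ρ_r(T_m^1, C^{⊗m}) ≥ (1/(4·12^{m−2}))·ρ^{(1/2)(m−2)(m+3)+1}. -/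

import Mathlib

noncomputable section

open Polynomial

/-- Normalized Hamming weight. -/
def normWt {ι F : Type*} [Fintype ι] [Zero F] (x : ι → F) : ℝ :=
  (Nat.card {p : ι // x p ≠ 0} : ℝ) / (Fintype.card ι : ℝ)

/-- Normalized Hamming distance from a word to a set of words. -/
def distTo {ι F : Type*} [Fintype ι] [AddGroup F] (x : ι → F) (S : Set (ι → F)) : ℝ :=
  sInf ((fun c => normWt (x - c)) '' S)

/-- Normalized minimum distance of a code. -/
def minDist {ι F : Type*} [Fintype ι] [Zero F] (S : Set (ι → F)) : ℝ :=
  sInf (normWt '' (S \ {0}))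

/-- Restriction of a word on a grid to the axis-`i` line through `y`. -/
def lineRestrict {F : Type*} {m : ℕ} {n : Fin m → ℕ}
    (x : (∀ j, Fin (n j)) → F) (i : Fin m) (y : ∀ j, Fin (n j)) : Fin (n i) → F :=
  fun s => x (Function.update y i s)

/-- `‖x‖_i`: the fraction of axis-`i` parallel lines on which `x` is nonzero. -/
def lineWt {F : Type*} [Zero F] {m : ℕ} {n : Fin m → ℕ}
    (x : (∀ j, Fin (n j)) → F) (i : Fin m) : ℝ :=
  (Nat.card {y : ∀ j, Fin (n j) // lineRestrict x i y ≠ 0} : ℝ) /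
    (Fintype.card (∀ j, Fin (n j)) : ℝ)

/-- `C^{(i)}`: words all of whose axis-`i` lines belong to `C i`. -/
def axisCode {F : Type*} {m : ℕ} {n : Fin m → ℕ}
    (C : ∀ i, Set (Fin (n i) → F)) (i : Fin m) : Set ((∀ j, Fin (n j)) → F) :=
  {x | ∀ y, lineRestrict x i y ∈ C i}

/-- Tensor product code `C₁ ⊗ ⋯ ⊗ C_m`. -/
def prodCode {F : Type*} {m : ℕ} {n : Fin m → ℕ}
    (C : ∀ i, Set (Fin (n i) → F)) : Set ((∀ j, Fin (n j)) → F) :=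
  ⋂ i, axisCode C i

/-- Dual code w.r.t. the standard bilinear form. -/
def dualCode {ι F : Type*} [Fintype ι] [CommRing F] (S : Set (ι → F)) : Set (ι → F) :=
  {x | ∀ c ∈ S, ∑ p, x p * c p = 0}

/-- `C₁ ⊞ ⋯ ⊞ C_m := (C₁^⊥ ⊗ ⋯ ⊗ C_m^⊥)^⊥`. -/
def boxCode {F : Type*} [CommRing F] {m : ℕ} {n : Fin m → ℕ}
    (C : ∀ i, Set (Fin (n i) → F)) : Set ((∀ j, Fin (n j)) → F) :=
  dualCode (prodCode (fun i => dualCode (C i)))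

/-- `ρ`-product-expansion of a collection of codes. -/
def productExpanding {F : Type*} [Field F] {m : ℕ} {n : Fin m → ℕ}
    (C : ∀ i, Set (Fin (n i) → F)) (ρ : ℝ) : Prop :=
  ∀ c ∈ boxCode C, ∃ a : Fin m → ((∀ j, Fin (n j)) → F),
    (∀ i, a i ∈ axisCode C i) ∧ c = ∑ i, a i ∧
      ρ * ∑ i, lineWt (a i) i ≤ normWt c

/-- The product-expansion constant `ρ(𝒞)`. -/
def prodExpConst {F : Type*} [Field F] {m : ℕ} {n : Fin m → ℕ}
    (C : ∀ i, Set (Fin (n i) → F)) : ℝ :=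
  sSup {ρ : ℝ | productExpanding C ρ}

/-- Expected distance under the axis-parallel line test `T_m^1`. -/
def lineTestE {F : Type*} [Field F] {m : ℕ} {n : Fin m → ℕ}
    (C : ∀ i, Set (Fin (n i) → F)) (x : (∀ j, Fin (n j)) → F) : ℝ :=
  (∑ i, (∑ y : ∀ j, Fin (n j), distTo (lineRestrict x i y) (C i)) /
      (Fintype.card (∀ j, Fin (n j)) : ℝ)) / (m : ℝ)

/-- Robustness constant `ρ_r(T_m^1, ⊗𝒞)` of the axis-parallel line test. -/
def lineRobustConst {F : Type*} [Field F] {m : ℕ} {n : Fin m → ℕ}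
    (C : ∀ i, Set (Fin (n i) → F)) : ℝ :=
  sSup {α : ℝ | ∀ x, α * distTo x (prodCode C) ≤ lineTestE C x}

/-- Agreement-testability constant `ρ_a(⊗𝒞)`. -/
def agreeConst {F : Type*} [Field F] {m : ℕ} {n : Fin m → ℕ}
    (C : ∀ i, Set (Fin (n i) → F)) : ℝ :=
  sSup {α : ℝ | ∀ c : Fin m → ((∀ j, Fin (n j)) → F),
    (∀ i, c i ∈ axisCode C i) → ∃ z ∈ prodCode C,
      α * ((∑ i, lineWt (c i - z) i) / (m : ℝ)) ≤
        (∑ i, ∑ j, normWt (c i - c j)) / ((m : ℝ) ^ 2)}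

/-- `C^{⊗k}` on the grid `[n]^k`. -/
def tensorPow {F : Type*} {n : ℕ} (C : Set (Fin n → F)) (k : ℕ) :
    Set ((Fin k → Fin n) → F) :=
  {x | ∀ (i : Fin k) (y : Fin k → Fin n), (fun s => x (Function.update y i s)) ∈ C}

/-- Restriction of a word to the axis-parallel `k`-flat determined by the axes
`e : Fin k ↪ Fin m` and base point `y`. -/
def flatRestrict {F : Type*} {n m k : ℕ} (x : (Fin m → Fin n) → F)
    (e : Fin k ↪ Fin m) (y : Fin m → Fin n) : (Fin k → Fin n) → F :=
  fun z => x (fun j => if h : ∃ l, e l = j then z h.choose else y j)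

/-- Expected distance under the axis-parallel `k`-flat test `T_m^k` for `C^{⊗m}`. -/
def flatTestE {F : Type*} [Field F] {n : ℕ} (C : Set (Fin n → F)) (m k : ℕ)
    (x : (Fin m → Fin n) → F) : ℝ :=
  (∑ e : Fin k ↪ Fin m, ∑ y : Fin m → Fin n,
      distTo (flatRestrict x e y) (tensorPow C k)) /
    ((Fintype.card (Fin k ↪ Fin m) : ℝ) * (Fintype.card (Fin m → Fin n) : ℝ))

/-- Robustness constant `ρ_r(T_m^k, C^{⊗m})`. -/
def flatRobustConst {F : Type*} [Field F] {n : ℕ} (C : Set (Fin n → F)) (m k : ℕ) : ℝ :=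
  sSup {α : ℝ | ∀ x : (Fin m → Fin n) → F,
    α * distTo x (tensorPow C m) ≤ flatTestE C m k x}

/-- The polynomial `Σ aᵢ xⁱ` of a word of length `n`. -/
def wordPoly {F : Type*} [CommSemiring F] {n : ℕ} (a : Fin n → F) : Polynomial F :=
  ∑ i, Polynomial.C (a i) * Polynomial.X ^ (i : ℕ)

/-- The cyclic code of length `n` with check polynomial `p`. -/
def cyclicCode {F : Type*} [CommRing F] (n : ℕ) (p : Polynomial F) : Set (Fin n → F) :=
  {a | (Polynomial.X ^ n - 1) ∣ p * wordPoly a}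

/-- Check polynomial `(x-1)(x-ω)⋯(x-ω^{k-1})` of the primitive Reed–Solomon code. -/
def rsCheck {F : Type*} [CommRing F] (k : ℕ) (ω : F) : Polynomial F :=
  ∏ i ∈ Finset.range k, (Polynomial.X - Polynomial.C (ω ^ i))

/-- The primitive Reed–Solomon evaluation code of degree `< k` at the nonzero points. -/
def evalRS (F : Type*) [Field F] [Fintype F] (k : ℕ) : Set (Fˣ → F) :=
  {c | ∃ p : Polynomial F, p.degree < (k : ℕ) ∧ ∀ a : Fˣ, c a = p.eval (a : F)}

/-- Words on `ι₁ × ι₂` all of whose columns lie in `S`. -/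
def colCode {ι₁ ι₂ F : Type*} (S : Set (ι₁ → F)) : Set (ι₁ × ι₂ → F) :=
  {x | ∀ j, (fun i => x (i, j)) ∈ S}

/-- Words on `ι₁ × ι₂` all of whose rows lie in `S`. -/
def rowCode {ι₁ ι₂ F : Type*} (S : Set (ι₂ → F)) : Set (ι₁ × ι₂ → F) :=
  {x | ∀ i, (fun j => x (i, j)) ∈ S}

/-- The multivariate polynomial `Σ_y x_y ∏ᵢ Xᵢ^{yᵢ}` of a word on the grid `[n]^m`. -/
def wordPolyMv {F : Type*} [CommSemiring F] {m n : ℕ} (x : (Fin m → Fin n) → F) :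
    MvPolynomial (Fin m) F :=
  ∑ y : Fin m → Fin n, MvPolynomial.C (x y) * ∏ i, MvPolynomial.X i ^ ((y i : ℕ))

/-! A uniformly random axis-parallel `k`-flat of a uniformly random axis-parallel `a`-flat is a
uniformly random `k`-flat (permutations of the axes act transitively on ordered `k`-tuples of
axes), so robustness constants of flat tests compose: `ρ_r(T_K^a) · ρ_r(T_a^k) ≤ ρ_r(T_K^k)`.
Chaining the hyperplane tests `T_m^{m-1}, …, T_3^2` down to `T_2^1` and inserting
`ρ_r(T_2^1) ≥ ρ_a/(2(1+ρ_a)) ≥ ρ/4` (as `ρ ≤ ρ_a` and `ρ ≤ δ(C) ≤ 1`) and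
`ρ_r(T_k^{k-1}) ≥ δ(C)^k/12 ≥ ρ^k/12` bounds `ρ_r(T_m^1)` below by `ρ/4 · ∏_{k=3}^m ρ^k/12`,
whose exponent is `1 + ∑_{k=3}^m k = 1 + (m-2)(m+3)/2`. -/

open Finset Function
open scoped BigOperators

section HammingDistance

variable {ι F : Type*} [Fintype ι]

lemma normWt_nonneg [Zero F] (x : ι → F) : 0 ≤ normWt x := by
  unfold normWt; positivity

lemma normWt_le_one [Zero F] (x : ι → F) : normWt x ≤ 1 := by
  rw [normWt, ← Nat.card_eq_fintype_card]
  exact div_le_one_of_le₀ (by exact_mod_cast Finite.card_subtype_le _) (Nat.cast_nonneg _)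

lemma inv_card_le_normWt [Zero F] {x : ι → F} (hx : x ≠ 0) :
    (Fintype.card ι : ℝ)⁻¹ ≤ normWt x := by
  obtain ⟨p, hp⟩ := Function.ne_iff.1 hx
  have : Nonempty {p : ι // x p ≠ 0} := ⟨⟨p, hp⟩⟩
  rw [normWt, inv_eq_one_div]
  gcongr
  exact_mod_cast Nat.card_pos

lemma distTo_nonneg [AddGroup F] (x : ι → F) (S : Set (ι → F)) : 0 ≤ distTo x S :=
  Real.sInf_nonneg (by rintro _ ⟨c, _, rfl⟩; exact normWt_nonneg _)

lemma inv_card_le_distTo [AddGroup F] {x : ι → F} {S : Set (ι → F)} (hS : S.Nonempty)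
    (hx : x ∉ S) : (Fintype.card ι : ℝ)⁻¹ ≤ distTo x S :=
  le_csInf (hS.image _) <| by
    rintro _ ⟨c, hc, rfl⟩
    exact inv_card_le_normWt (sub_ne_zero.2 (ne_of_mem_of_not_mem hc hx).symm)

lemma minDist_le_one [Zero F] (S : Set (ι → F)) : minDist S ≤ 1 := by
  rcases (S \ {0}).eq_empty_or_nonempty with h | ⟨c, hc⟩
  · simp [minDist, h]
  · exact (csInf_le ⟨0, by rintro _ ⟨d, _, rfl⟩; exact normWt_nonneg d⟩
      (Set.mem_image_of_mem _ hc)).trans (normWt_le_one c)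

end HammingDistance

lemma productExpanding.zero {F : Type*} [Field F] {m : ℕ} {n : Fin m → ℕ}
    {C : ∀ i, Set (Fin (n i) → F)} {ρ : ℝ} (h : productExpanding C ρ) :
    productExpanding C 0 := fun c hc => by
  obtain ⟨a, ha, hsum, _⟩ := h c hc
  exact ⟨a, ha, hsum, by rw [zero_mul]; exact normWt_nonneg c⟩

lemma prodExpConst_nonneg {F : Type*} [Field F] {m : ℕ} {n : Fin m → ℕ}
    (C : ∀ i, Set (Fin (n i) → F)) : 0 ≤ prodExpConst C := by
  rcases Set.eq_empty_or_nonempty {ρ : ℝ | productExpanding C ρ} with h | ⟨ρ, hρ⟩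
  · simp [prodExpConst, h]
  · exact Real.sSup_nonneg' ⟨0, productExpanding.zero hρ, le_rfl⟩

section Robustness

variable {F : Type*} [Field F] {n : ℕ}

lemma flatTestE_eq_expect (C : Set (Fin n → F)) (m k : ℕ) (x : (Fin m → Fin n) → F) :
    flatTestE C m k x =
      𝔼 e : Fin k ↪ Fin m, 𝔼 y : Fin m → Fin n, distTo (flatRestrict x e y) (tensorPow C k) := by
  simp only [flatTestE, Fintype.expect_eq_sum_div_card, ← Finset.sum_div, div_div, mul_comm]

lemma flatTestE_nonneg (C : Set (Fin n → F)) (m k : ℕ) (x : (Fin m → Fin n) → F) :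
    0 ≤ flatTestE C m k x := by
  rw [flatTestE_eq_expect]
  exact expect_nonneg fun e _ => expect_nonneg fun y _ => distTo_nonneg _ _

lemma flatRobustConst_nonneg (C : Set (Fin n → F)) (m k : ℕ) : 0 ≤ flatRobustConst C m k :=
  Real.sSup_nonneg' ⟨0, fun x => by rw [zero_mul]; exact flatTestE_nonneg C m k x, le_rfl⟩

lemma flatRobustConst_mul_distTo_le (C : Set (Fin n → F)) (m k : ℕ) (x : (Fin m → Fin n) → F) :
    flatRobustConst C m k * distTo x (tensorPow C m) ≤ flatTestE C m k x := by
  rcases (distTo_nonneg x (tensorPow C m)).eq_or_lt with h | h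
  · rw [← h, mul_zero]
    exact flatTestE_nonneg C m k x
  · rw [← le_div_iff₀ h]
    refine csSup_le ⟨0, fun x => ?_⟩ fun α hα => (le_div_iff₀ h).2 (hα x)
    rw [zero_mul]
    exact flatTestE_nonneg C m k x

lemma le_flatRobustConst {C : Set (Fin n → F)} {m : ℕ} (k : ℕ)
    (hC : ∃ x : (Fin m → Fin n) → F, 0 < distTo x (tensorPow C m)) {α : ℝ}
    (hα : ∀ x, α * distTo x (tensorPow C m) ≤ flatTestE C m k x) :
    α ≤ flatRobustConst C m k := by
  obtain ⟨x₀, hx₀⟩ := hC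
  exact le_csSup ⟨flatTestE C m k x₀ / distTo x₀ (tensorPow C m),
    fun β hβ => (le_div_iff₀ hx₀).2 (hβ x₀)⟩ hα

lemma exists_distTo_tensorPow_pos {C : Submodule F (Fin n → F)} (hC : C ≠ ⊤) {k : ℕ}
    (hk : 1 ≤ k) : ∃ x : (Fin k → Fin n) → F, 0 < distTo x (tensorPow (C : Set _) k) := by
  obtain ⟨w, hw⟩ : ∃ w, w ∉ C := by
    by_contra! h
    exact hC (Submodule.eq_top_iff'.2 h)
  obtain ⟨p, -⟩ := Function.ne_iff.1 (ne_of_mem_of_not_mem C.zero_mem hw)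
  have : Nonempty (Fin n) := ⟨p⟩
  let i₀ : Fin k := ⟨0, hk⟩
  refine ⟨fun z => w (z i₀), lt_of_lt_of_le (by positivity) (inv_card_le_distTo
    ⟨0, fun _ _ => C.zero_mem⟩ fun hx => hw ?_)⟩
  simpa using hx i₀ fun _ => p

end Robustness

section Extend

variable {ι κ α : Type*}

lemma Function.Injective.extend_extend_right {e : ι → κ} (he : Injective e) (g z : ι → α)
    (y : κ → α) : extend e g (extend e z y) = extend e g y := by
  funext j
  by_cases hj : ∃ i, e i = j
  · obtain ⟨i, rfl⟩ := hj
    simp only [he.extend_apply]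
  · simp only [extend_apply' _ _ _ hj]

lemma Function.Injective.extend_extend_eq_extend_comp {ι' : Type*} {e : ι → κ} {f : ι' → ι}
    (he : Injective e) (hf : Injective f) (w : ι' → α) (z : ι → α) (y : κ → α) :
    extend e (extend f w z) y = extend (e ∘ f) w (extend e z y) := by
  rw [hf.extend_comp he, Function.extend_comp he, he.extend_extend_right]

lemma Function.Injective.involutive_extend_comp {e : ι → κ} (he : Injective e) :
    Involutive fun p : (κ → α) × (ι → α) => (extend e p.2 p.1, p.1 ∘ e) := by
  rintro ⟨y, z⟩
  refine Prod.ext ?_ (Function.extend_comp he z y)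
  dsimp only
  rw [he.extend_extend_right]
  funext j
  by_cases hj : ∃ i, e i = j
  · obtain ⟨i, rfl⟩ := hj
    simp only [he.extend_apply, comp_apply]
  · simp only [extend_apply' _ _ _ hj]

lemma expect_expect_extend {M : Type*} [AddCommMonoid M] [Module ℚ≥0 M] [Fintype ι] [Fintype κ]
    [Fintype α] [DecidableEq ι] [DecidableEq κ] (e : ι ↪ κ) (G : (κ → α) → M) :
    𝔼 y, 𝔼 z, G (extend e z y) = 𝔼 y, G y := by
  rcases isEmpty_or_nonempty (ι → α) with h | h
  · have : IsEmpty (κ → α) := ⟨fun w => h.elim (w ∘ e)⟩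
    simp
  · let σ := Involutive.toPerm _ (e.injective.involutive_extend_comp (α := α))
    calc 𝔼 y, 𝔼 z, G (extend e z y) = 𝔼 p, G (σ p).1 := (expect_product' _ _ _).symm
      _ = 𝔼 p : (κ → α) × (ι → α), G p.1 := Fintype.expect_equiv σ _ _ fun _ => rfl
      _ = 𝔼 y, G y := by
        rw [← univ_product_univ, expect_product' univ univ fun y _ => G y]
        simp

end Extend

lemma expect_comp_of_card_fiber_eq {α β M : Type*} [Semifield M] [CharZero M] [Fintype α]
    [Nonempty α] [Fintype β] [DecidableEq β] (π : α → β)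
    (hπ : ∀ b b', #{a | π a = b} = #{a | π a = b'}) (H : β → M) :
    𝔼 a, H (π a) = 𝔼 b, H b := by
  obtain ⟨a₀⟩ := ‹Nonempty α›
  set c := #{a | π a = π a₀}
  have hc : (c : M) ≠ 0 := Nat.cast_ne_zero.2 (Finset.card_pos.2 ⟨a₀, by simp⟩).ne'
  have hsum : ∑ a, H (π a) = c * ∑ b, H b := by
    rw [← Finset.sum_fiberwise' univ π, mul_sum]
    refine sum_congr rfl fun b _ => ?_
    rw [sum_const, hπ b (π a₀), nsmul_eq_mul]
  have hcard : (Fintype.card α : M) = c * Fintype.card β := by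
    rw [← card_univ, card_eq_sum_card_fiberwise fun a _ => mem_univ (π a)]
    simp [sum_congr rfl fun b _ => hπ b (π a₀), mul_comm, c]
  rw [Fintype.expect_eq_sum_div_card, Fintype.expect_eq_sum_div_card, hsum, hcard,
    mul_div_mul_left _ _ hc]

lemma card_filter_trans_eq_card_filter_trans {ι₁ ι₂ β : Type*} [Fintype ι₁] [Fintype ι₂]
    [Fintype β] [DecidableEq ι₁] [DecidableEq ι₂] [DecidableEq β] (g g' : ι₁ ↪ β) :
    #{p : (ι₂ ↪ β) × (ι₁ ↪ ι₂) | p.2.trans p.1 = g} =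
      #{p : (ι₂ ↪ β) × (ι₁ ↪ ι₂) | p.2.trans p.1 = g'} := by
  obtain ⟨σ, rfl⟩ := Equiv.Perm.exists_smul_eq_embedding g g'
  have trans_smul : ∀ (τ : Equiv.Perm β) (p : (ι₂ ↪ β) × (ι₁ ↪ ι₂)),
      p.2.trans (τ • p.1) = τ • p.2.trans p.1 := fun _ _ => rfl
  refine card_nbij' (fun p => (σ • p.1, p.2)) (fun p => (σ⁻¹ • p.1, p.2)) ?_ ?_ ?_ ?_ <;>
    simp [Set.MapsTo, Set.LeftInvOn, Set.RightInvOn, trans_smul, inv_smul_eq_iff]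

lemma flatRestrict_apply {F : Type*} {n m k : ℕ} (x : (Fin m → Fin n) → F) (e : Fin k ↪ Fin m)
    (y : Fin m → Fin n) (z : Fin k → Fin n) : flatRestrict x e y z = x (extend e z y) := by
  simp only [flatRestrict]
  congr 1
  funext j
  rw [extend_def]

lemma flatRestrict_flatRestrict {F : Type*} {n K a k : ℕ} (x : (Fin K → Fin n) → F)
    (e : Fin a ↪ Fin K) (y : Fin K → Fin n) (f : Fin k ↪ Fin a) (z : Fin a → Fin n) :
    flatRestrict (flatRestrict x e y) f z = flatRestrict x (f.trans e) (extend e z y) := by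
  funext w
  simp only [flatRestrict_apply, Embedding.coe_trans,
    e.injective.extend_extend_eq_extend_comp f.injective]

section Composition

variable {F : Type*} [Field F] {n : ℕ}

lemma expect_flatTestE_flatRestrict (C : Set (Fin n → F)) {k a K : ℕ} (hka : k ≤ a)
    (haK : a ≤ K) (x : (Fin K → Fin n) → F) :
    𝔼 e : Fin a ↪ Fin K, 𝔼 y, flatTestE C a k (flatRestrict x e y) = flatTestE C K k x := by
  have : Nonempty ((Fin a ↪ Fin K) × (Fin k ↪ Fin a)) :=
    ⟨(Fin.castLEEmb haK, Fin.castLEEmb hka)⟩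
  set D : (Fin k ↪ Fin K) → ℝ := fun g => 𝔼 w, distTo (flatRestrict x g w) (tensorPow C k)
  simp only [flatTestE_eq_expect, flatRestrict_flatRestrict]
  calc _ = 𝔼 e : Fin a ↪ Fin K, 𝔼 f : Fin k ↪ Fin a, 𝔼 y, 𝔼 z,
        distTo (flatRestrict x (f.trans e) (extend e z y)) (tensorPow C k) :=
          expect_congr rfl fun e _ => expect_comm _ _ _
    _ = 𝔼 e : Fin a ↪ Fin K, 𝔼 f : Fin k ↪ Fin a, D (f.trans e) := by
          refine expect_congr rfl fun e _ => expect_congr rfl fun f _ => ?_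
          exact expect_expect_extend e fun w => distTo (flatRestrict x (f.trans e) w) _
    _ = 𝔼 p : (Fin a ↪ Fin K) × (Fin k ↪ Fin a), D (p.2.trans p.1) := by
          simp only [← expect_product', univ_product_univ]
    _ = 𝔼 g, D g :=
          expect_comp_of_card_fiber_eq _ card_filter_trans_eq_card_filter_trans D

theorem flatRobustConst_mul_le {C : Set (Fin n → F)} {k a K : ℕ} (hka : k ≤ a) (haK : a ≤ K)
    (hC : ∃ x : (Fin K → Fin n) → F, 0 < distTo x (tensorPow C K)) :
    flatRobustConst C K a * flatRobustConst C a k ≤ flatRobustConst C K k := by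
  refine le_flatRobustConst k hC fun x => ?_
  have hρ := flatRobustConst_nonneg C a k
  calc flatRobustConst C K a * flatRobustConst C a k * distTo x (tensorPow C K)
      = flatRobustConst C a k * (flatRobustConst C K a * distTo x (tensorPow C K)) := by ring
    _ ≤ flatRobustConst C a k * flatTestE C K a x := by
      gcongr; exact flatRobustConst_mul_distTo_le C K a x
    _ = 𝔼 e : Fin a ↪ Fin K, 𝔼 y,
          flatRobustConst C a k * distTo (flatRestrict x e y) (tensorPow C a) := by
      simp only [flatTestE_eq_expect, mul_expect]
    _ ≤ 𝔼 e : Fin a ↪ Fin K, 𝔼 y, flatTestE C a k (flatRestrict x e y) :=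
      expect_le_expect fun e _ => expect_le_expect fun y _ =>
        flatRobustConst_mul_distTo_le C a k _
    _ = flatTestE C K k x := expect_flatTestE_flatRestrict C hka haK x

theorem flatRobustConst_two_one_mul_prod_le {C : Submodule F (Fin n → F)} (hC : C ≠ ⊤) {m : ℕ}
    (hm : 2 ≤ m) :
    flatRobustConst (C : Set (Fin n → F)) 2 1 *
        ∏ k ∈ Icc 3 m, flatRobustConst (C : Set (Fin n → F)) k (k - 1) ≤
      flatRobustConst (C : Set (Fin n → F)) m 1 := by
  induction m, hm using Nat.le_induction with
  | base => simp
  | succ M hM ih =>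
    rw [prod_Icc_succ_top (by omega), Nat.add_sub_cancel, ← mul_assoc]
    calc _ ≤ flatRobustConst (C : Set (Fin n → F)) M 1 *
          flatRobustConst (C : Set (Fin n → F)) (M + 1) M :=
          mul_le_mul_of_nonneg_right ih (flatRobustConst_nonneg _ _ _)
      _ ≤ flatRobustConst (C : Set (Fin n → F)) (M + 1) 1 := by
          rw [mul_comm]
          exact flatRobustConst_mul_le (by omega) (by omega)
            (exists_distTo_tensorPow_pos hC (by omega))

end Composition

lemma sum_Icc_three_id_mul_two {m : ℕ} (hm : 2 ≤ m) :
    (∑ k ∈ Icc 3 m, k) * 2 = (m - 2) * (m + 3) := by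
  obtain ⟨j, rfl⟩ := Nat.exists_eq_add_of_le' hm
  induction j with
  | zero => rfl
  | succ j ih =>
    rw [show j + 1 + 2 = j + 2 + 1 by ring, sum_Icc_succ_top (by omega), add_mul, ih (by omega),
      show j + 2 - 2 = j by omega, show j + 2 + 1 - 2 = j + 1 by omega]
    ring

theorem stmt_15_general {F : Type*} [Field F] {n : ℕ} (C : Submodule F (Fin n → F))
    (hC : C ≠ ⊤) (m : ℕ) (hm : 2 ≤ m) (ρ : ℝ)
    (hρ : ρ = prodExpConst (n := fun _ : Fin m => n) (fun _ => (C : Set (Fin n → F))))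
    (ha1 : ρ ≤ prodExpConst (n := fun _ : Fin 2 => n) (fun _ => (C : Set (Fin n → F))))
    (ha2 : ρ ≤ minDist (C : Set (Fin n → F)))
    (hb : prodExpConst (n := fun _ : Fin 2 => n) (fun _ => (C : Set (Fin n → F))) ≤
      agreeConst (n := fun _ : Fin 2 => n) (fun _ => (C : Set (Fin n → F))))
    (hc : agreeConst (n := fun _ : Fin 2 => n) (fun _ => (C : Set (Fin n → F))) /
        (2 * (1 + agreeConst (n := fun _ : Fin 2 => n) (fun _ => (C : Set (Fin n → F))))) ≤
      flatRobustConst (C : Set (Fin n → F)) 2 1)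
    (hd : ∀ k, 3 ≤ k → k ≤ m →
      (1 / 12 : ℝ) * minDist (C : Set (Fin n → F)) ^ k ≤
        flatRobustConst (C : Set (Fin n → F)) k (k - 1)) :
    (1 / (4 * 12 ^ (m - 2) : ℝ)) * ρ ^ ((m - 2) * (m + 3) / 2 + 1) ≤
      flatRobustConst (C : Set (Fin n → F)) m 1 := by
  set ρa := agreeConst (n := fun _ : Fin 2 => n) (fun _ => (C : Set (Fin n → F)))
  have hρ0 : 0 ≤ ρ := hρ ▸ prodExpConst_nonneg _
  have hρ1 : ρ ≤ 1 := ha2.trans (minDist_le_one _)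
  have hρa : ρ ≤ ρa := ha1.trans hb
  have hline2 : ρ / 4 ≤ flatRobustConst (C : Set (Fin n → F)) 2 1 := by
    refine le_trans ?_ hc
    rw [div_le_div_iff₀ (by norm_num) (by linarith)]
    nlinarith
  have hhyper : ∀ k ∈ Icc 3 m, 1 / 12 * ρ ^ k ≤ flatRobustConst (C : Set (Fin n → F)) k (k - 1) :=
    fun k hk => le_trans (by gcongr) (hd k (mem_Icc.1 hk).1 (mem_Icc.1 hk).2)
  calc (1 / (4 * 12 ^ (m - 2) : ℝ)) * ρ ^ ((m - 2) * (m + 3) / 2 + 1)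
      = ρ / 4 * ∏ k ∈ Icc 3 m, (1 / 12 * ρ ^ k) := by
        rw [prod_mul_distrib, prod_const, prod_pow_eq_pow_sum, Nat.card_Icc,
          ← sum_Icc_three_id_mul_two hm, Nat.mul_div_cancel _ two_pos, pow_succ,
          show m + 1 - 3 = m - 2 by omega, div_pow, one_pow]
        field_simp
    _ ≤ flatRobustConst (C : Set (Fin n → F)) 2 1 *
          ∏ k ∈ Icc 3 m, flatRobustConst (C : Set (Fin n → F)) k (k - 1) :=
        mul_le_mul hline2 (prod_le_prod (fun _ _ => by positivity) hhyper) (by positivity)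
          (flatRobustConst_nonneg _ _ _)
    _ ≤ flatRobustConst (C : Set (Fin n → F)) m 1 := flatRobustConst_two_one_mul_prod_le hC hm

/-- product expansion implies robustness of the line test:
`ρ_r(T_m^1, C^{⊗m}) ≥ ρ^{(m−2)(m+3)/2+1}/(4·12^{m−2})` with `ρ = ρ(C,…,C)`. -/
theorem stmt_15 {F : Type*} [Field F] [Fintype F] {n : ℕ} (C : Submodule F (Fin n → F))
    (hC : C ≠ ⊤) (m : ℕ) (hm : 2 ≤ m) (ρ : ℝ)
    (hρ : ρ = prodExpConst (n := fun _ : Fin m => n) (fun _ => (C : Set (Fin n → F))))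
    (ha1 : ρ ≤ prodExpConst (n := fun _ : Fin 2 => n) (fun _ => (C : Set (Fin n → F))))
    (ha2 : ρ ≤ minDist (C : Set (Fin n → F)))
    (hb : prodExpConst (n := fun _ : Fin 2 => n) (fun _ => (C : Set (Fin n → F))) ≤
      agreeConst (n := fun _ : Fin 2 => n) (fun _ => (C : Set (Fin n → F))))
    (hc : agreeConst (n := fun _ : Fin 2 => n) (fun _ => (C : Set (Fin n → F))) /
        (2 * (1 + agreeConst (n := fun _ : Fin 2 => n) (fun _ => (C : Set (Fin n → F))))) ≤
      flatRobustConst (C : Set (Fin n → F)) 2 1)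
    (hd : ∀ k, 3 ≤ k → k ≤ m →
      (1 / 12 : ℝ) * minDist (C : Set (Fin n → F)) ^ k ≤
        flatRobustConst (C : Set (Fin n → F)) k (k - 1)) :
    (1 / (4 * 12 ^ (m - 2) : ℝ)) * ρ ^ ((m - 2) * (m + 3) / 2 + 1) ≤
      flatRobustConst (C : Set (Fin n → F)) m 1 :=
  stmt_15_general C hC m hm ρ hρ ha1 ha2 hb hc hd

end
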